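/- Let b = [[0,0,0,1],[0,0,1,0],[0,1,0,0],[1,0,0,0]] (matrix b^(22), the full swap matrix) and I the 2×2 identity, over ℂ(ξ_α,ξ_β,ξ_γ). With R_{βα} = −(I⊗I − ξ_α b)⁻¹(I⊗I − ξ_β b), the Yang–Baxter equation (R_{γβ}⊗I)(I⊗R_{γα})(R_{βα}⊗I) = (I⊗R_{βα})(R_{γα}⊗I)(I⊗R_{γβ}) holds. -/
import Mathlib


open Matrix

noncomputable section

/-- The field of rational functions in the three spectral parameters `ξ_α, ξ_β, ξ_γ`. -/
abbrev KK : Type := FractionRing (MvPolynomial (Fin 3) ℚ)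

/-- The spectral parameters `ξ 0 = ξ_α`, `ξ 1 = ξ_β`, `ξ 2 = ξ_γ` as elements of `KK`. -/
def xi (i : Fin 3) : KK := algebraMap (MvPolynomial (Fin 3) ℚ) KK (MvPolynomial.X i)

/-- Reindexing of a 4×4 matrix by pairs, lexicographically: 0↦11, 1↦12, 2↦21, 3↦22. -/
def toPairs (M : Matrix (Fin 4) (Fin 4) KK) :
    Matrix (Fin 2 × Fin 2) (Fin 2 × Fin 2) KK :=
  Matrix.reindex finProdFinEquiv.symm finProdFinEquiv.symm M

/-- The matrix `b^(22)` of Alimohammadi–Ahmadi (the full swap matrix). -/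
def bmat : Matrix (Fin 2 × Fin 2) (Fin 2 × Fin 2) KK :=
  toPairs !![0,0,0,1; 0,0,1,0; 0,1,0,0; 1,0,0,0]

/-- The scattering matrix `R_{βα} = −(I⊗I − ξ_α b)⁻¹ (I⊗I − ξ_β b)`
(here `1` is the 4×4 identity `I⊗I`). -/
def R (β α : Fin 3) : Matrix (Fin 2 × Fin 2) (Fin 2 × Fin 2) KK :=
  -((1 - xi α • bmat)⁻¹ * (1 - xi β • bmat))

/-- `A ⊗ I` acting on the first two tensor factors of `(ℂ²)^{⊗3}`. -/
def legL (A : Matrix (Fin 2 × Fin 2) (Fin 2 × Fin 2) KK) :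
    Matrix (Fin 2 × Fin 2 × Fin 2) (Fin 2 × Fin 2 × Fin 2) KK :=
  Matrix.of fun p q => A (p.1, p.2.1) (q.1, q.2.1) * (if p.2.2 = q.2.2 then 1 else 0)

/-- `I ⊗ A` acting on the last two tensor factors of `(ℂ²)^{⊗3}`. -/
def legR (A : Matrix (Fin 2 × Fin 2) (Fin 2 × Fin 2) KK) :
    Matrix (Fin 2 × Fin 2 × Fin 2) (Fin 2 × Fin 2 × Fin 2) KK :=
  Matrix.of fun p q => (if p.1 = q.1 then 1 else 0) * A (p.2.1, p.2.2) (q.2.1, q.2.2)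

/-! ### Auxiliary lemmas -/

lemma bmat_entry (p q : Fin 2 × Fin 2) :
    bmat p q = if p.1 = q.1 ∨ p.2 = q.2 then 0 else 1 := by
  obtain ⟨i, j⟩ := p; obtain ⟨k, l⟩ := q
  fin_cases i <;> fin_cases j <;> fin_cases k <;> fin_cases l <;>
    simp [bmat, toPairs, finProdFinEquiv] <;> rfl

lemma bmat_sq : bmat * bmat = 1 := by
  ext ⟨i, j⟩ ⟨k, l⟩
  simp [mul_apply, Fintype.sum_prod_type, Fin.sum_univ_two, bmat_entry, Matrix.one_apply,
    Prod.ext_iff]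
  fin_cases i <;> fin_cases j <;> fin_cases k <;> fin_cases l <;> simp

lemma hx (i : Fin 3) : (1 : KK) - xi i ^ 2 ≠ 0 := by
  rw [sub_ne_zero]
  intro hh
  have h2 : algebraMap (MvPolynomial (Fin 3) ℚ) KK 1
      = algebraMap (MvPolynomial (Fin 3) ℚ) KK (MvPolynomial.X i ^ 2) := by
    simpa [xi] using hh
  have h3 : (1 : MvPolynomial (Fin 3) ℚ) = MvPolynomial.X i ^ 2 :=
    IsFractionRing.injective (MvPolynomial (Fin 3) ℚ) KK h2
  have h4 := congrArg (MvPolynomial.coeff (Finsupp.single i 2)) h3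
  simp [MvPolynomial.coeff_X_pow, MvPolynomial.coeff_one, eq_comm,
    Finsupp.single_eq_zero] at h4

lemma aux1 {K : Type} [Field K] {n : Type} [Fintype n] [DecidableEq n]
    (x : K) (b : Matrix n n K) (hb : b * b = 1) :
    (1 - x • b) * (1 + x • b) = (1 - x ^ 2) • 1 := by
  simp only [mul_add, sub_mul, one_mul, mul_one, mul_smul_comm, smul_mul_assoc,
    smul_smul, hb, sub_smul, one_smul]
  module

lemma aux2 {K : Type} [Field K] {n : Type} [Fintype n] [DecidableEq n]
    (x y : K) (b : Matrix n n K) (hb : b * b = 1) :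
    -((1 + x • b) * (1 - y • b)) = (x * y - 1) • 1 + (y - x) • b := by
  simp only [mul_sub, add_mul, one_mul, mul_one, mul_smul_comm, smul_mul_assoc,
    smul_smul, hb, sub_smul, one_smul]
  module

lemma one_sub_smul_inv (i : Fin 3) :
    (1 - xi i • bmat)⁻¹ = (1 - xi i ^ 2)⁻¹ • (1 + xi i • bmat) := by
  apply Matrix.inv_eq_right_inv
  rw [mul_smul_comm, aux1 (xi i) bmat bmat_sq, smul_smul, inv_mul_cancel₀ (hx i), one_smul]

lemma R_eq (β α : Fin 3) :
    R β α = (1 - xi α ^ 2)⁻¹ •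
      ((xi α * xi β - 1) • 1 + (xi β - xi α) • bmat) := by
  rw [R, one_sub_smul_inv, smul_mul_assoc, ← smul_neg, aux2 (xi α) (xi β) bmat bmat_sq]

lemma legL_one : legL 1 = 1 := by
  ext ⟨i, j, k⟩ ⟨i', j', k'⟩
  simp [legL, Matrix.one_apply, Prod.ext_iff, ite_and]
  split_ifs <;> simp_all

lemma legR_one : legR 1 = 1 := by
  ext ⟨i, j, k⟩ ⟨i', j', k'⟩
  simp [legR, Matrix.one_apply, Prod.ext_iff, ite_and]
  split_ifs <;> simp_all

lemma legL_smul (c : KK) (A) : legL (c • A) = c • legL A := by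
  ext p q; simp [legL, mul_assoc]

lemma legR_smul (c : KK) (A) : legR (c • A) = c • legR A := by
  ext p q; simp [legR]

lemma legL_add (A B) : legL (A + B) = legL A + legL B := by
  ext p q; simp [legL, add_mul]; split_ifs <;> simp

lemma legR_add (A B) : legR (A + B) = legR A + legR B := by
  ext p q; simp [legR, mul_add]

lemma hB1 : legL bmat * legL bmat = 1 := by
  ext ⟨i, j, k⟩ ⟨i', j', k'⟩
  simp [mul_apply, Fintype.sum_prod_type, Fin.sum_univ_two, legL, bmat_entry,
    Matrix.one_apply, Prod.ext_iff]
  fin_cases i <;> fin_cases j <;> fin_cases i' <;> fin_cases j' <;> simp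

lemma hB2 : legR bmat * legR bmat = 1 := by
  ext ⟨i, j, k⟩ ⟨i', j', k'⟩
  simp [mul_apply, Fintype.sum_prod_type, Fin.sum_univ_two, legR, bmat_entry,
    Matrix.one_apply, Prod.ext_iff]
  fin_cases j <;> fin_cases k <;> fin_cases j' <;> fin_cases k' <;>
    fin_cases i <;> fin_cases i' <;> simp

lemma hB12 : legR bmat * legL bmat = legL bmat * legR bmat := by
  ext ⟨i, j, k⟩ ⟨i', j', k'⟩
  simp [mul_apply, Fintype.sum_prod_type, Fin.sum_univ_two, legL, legR, bmat_entry]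
  fin_cases i <;> fin_cases j <;> fin_cases k <;> fin_cases i' <;> fin_cases j' <;>
    fin_cases k' <;> simp

set_option maxHeartbeats 1600000 in
lemma key {K : Type} [Field K] {n : Type} [Fintype n] [DecidableEq n] (B C : Matrix n n K)
    (hB : B * B = 1) (hC : C * C = 1) (hBC : C * B = B * C)
    (a1 c1 a2 c2 a3 c3 : K)
    (h : a2 * (a1 * c3 + c1 * a3) = c2 * (a1 * a3 + c1 * c3)) :
    (a1 • 1 + c1 • B) * (a2 • (1 : Matrix n n K) + c2 • C) * (a3 • 1 + c3 • B)
      = (a3 • 1 + c3 • C) * (a2 • 1 + c2 • B) * (a1 • 1 + c1 • C) := by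
  have hBB : ∀ X : Matrix n n K, B * (B * X) = X := fun X => by
    rw [← mul_assoc, hB, one_mul]
  have hCC : ∀ X : Matrix n n K, C * (C * X) = X := fun X => by
    rw [← mul_assoc, hC, one_mul]
  have hCBX : ∀ X : Matrix n n K, C * (B * X) = B * (C * X) := fun X => by
    rw [← mul_assoc, hBC, mul_assoc]
  simp only [mul_add, add_mul, smul_mul_assoc, mul_smul_comm, smul_smul, one_mul, mul_one,
    mul_assoc, hB, hC, hBC, hBB, hCC, hCBX]
  simp only [smul_add, smul_smul]
  generalize (1 : Matrix n n K) = D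
  match_scalars
  · ring
  · linear_combination h
  · linear_combination -h
  · ring

/-- The Yang–Baxter equation for this interaction matrix:
`(R_{γβ} ⊗ I)(I ⊗ R_{γα})(R_{βα} ⊗ I) = (I ⊗ R_{βα})(R_{γα} ⊗ I)(I ⊗ R_{γβ})`
with `α = 0`, `β = 1`, `γ = 2`. -/
theorem yang_baxter_b22 :
    legL (R 2 1) * legR (R 2 0) * legL (R 1 0) =
      legR (R 1 0) * legL (R 2 0) * legR (R 2 1) := by
  have e1 : legL (R 2 1) = (1 - xi 1 ^ 2)⁻¹ •
      ((xi 1 * xi 2 - 1) • 1 + (xi 2 - xi 1) • legL bmat) := by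
    rw [R_eq, legL_smul, legL_add, legL_smul, legL_smul, legL_one]
  have e2 : legR (R 2 0) = (1 - xi 0 ^ 2)⁻¹ •
      ((xi 0 * xi 2 - 1) • 1 + (xi 2 - xi 0) • legR bmat) := by
    rw [R_eq, legR_smul, legR_add, legR_smul, legR_smul, legR_one]
  have e3 : legL (R 1 0) = (1 - xi 0 ^ 2)⁻¹ •
      ((xi 0 * xi 1 - 1) • 1 + (xi 1 - xi 0) • legL bmat) := by
    rw [R_eq, legL_smul, legL_add, legL_smul, legL_smul, legL_one]
  have e4 : legR (R 1 0) = (1 - xi 0 ^ 2)⁻¹ •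
      ((xi 0 * xi 1 - 1) • 1 + (xi 1 - xi 0) • legR bmat) := by
    rw [R_eq, legR_smul, legR_add, legR_smul, legR_smul, legR_one]
  have e5 : legL (R 2 0) = (1 - xi 0 ^ 2)⁻¹ •
      ((xi 0 * xi 2 - 1) • 1 + (xi 2 - xi 0) • legL bmat) := by
    rw [R_eq, legL_smul, legL_add, legL_smul, legL_smul, legL_one]
  have e6 : legR (R 2 1) = (1 - xi 1 ^ 2)⁻¹ •
      ((xi 1 * xi 2 - 1) • 1 + (xi 2 - xi 1) • legR bmat) := by
    rw [R_eq, legR_smul, legR_add, legR_smul, legR_smul, legR_one]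
  rw [e1, e2, e3, e4, e5, e6]
  simp only [smul_mul_assoc, mul_smul_comm, smul_smul]
  rw [show (1 - xi 1 ^ 2)⁻¹ * ((1 - xi 0 ^ 2)⁻¹ * (1 - xi 0 ^ 2)⁻¹)
      = (1 - xi 0 ^ 2)⁻¹ * ((1 - xi 0 ^ 2)⁻¹ * (1 - xi 1 ^ 2)⁻¹) from by ring]
  congr 1
  exact key (legL bmat) (legR bmat) hB1 hB2 hB12
    (xi 1 * xi 2 - 1) (xi 2 - xi 1) (xi 0 * xi 2 - 1) (xi 2 - xi 0)
    (xi 0 * xi 1 - 1) (xi 1 - xi 0) (by ring)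

end
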